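/- arXiv:1705.03997 — 5 statements merged into one kernel-verified Lean document; each statement's English description precedes it below -/
import Mathlib

section
/- Let u : ℝ² → ℝ be smooth and satisfy the bosonic reduction of the SKdV_{-2} equation, u_t = (-u_{xx} + u³/2)_x. Then the differential operators L = ∂² - u∂ and P = -4∂³ + 6u∂² + (3u_x - (3/2)u²)∂ satisfy the Lax equation L_t = [P, L], i.e. the operator L_t - PL + LP annihilates every smooth function φ(x). -/
open scoped ContDiff

private theorem D_add {f g : ℝ → ℝ} (hf : Differentiable ℝ f) (hg : Differentiable ℝ g) :
    (deriv fun x => f x + g x) = fun x => deriv f x + deriv g x :=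
  funext fun x => deriv_add (hf x) (hg x)

private theorem D_sub {f g : ℝ → ℝ} (hf : Differentiable ℝ f) (hg : Differentiable ℝ g) :
    (deriv fun x => f x - g x) = fun x => deriv f x - deriv g x :=
  funext fun x => deriv_sub (hf x) (hg x)

private theorem D_neg {f : ℝ → ℝ} :
    (deriv fun x => -(f x)) = fun x => -(deriv f x) :=
  funext fun x => deriv.neg

private theorem D_mul {f g : ℝ → ℝ} (hf : Differentiable ℝ f) (hg : Differentiable ℝ g) :
    (deriv fun x => f x * g x) = fun x => deriv f x * g x + f x * deriv g x :=
  funext fun x => deriv_mul (hf x) (hg x)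

private theorem D_const_mul (c : ℝ) {f : ℝ → ℝ} (hf : Differentiable ℝ f) :
    (deriv fun x => c * f x) = fun x => c * deriv f x :=
  funext fun x => deriv_const_mul c (hf x)

private theorem D_sq {f : ℝ → ℝ} (hf : Differentiable ℝ f) :
    (deriv fun x => f x ^ 2) = fun x => 2 * f x * deriv f x :=
  funext fun x => by simpa using ((hf x).hasDerivAt.fun_pow 2).deriv

private theorem D_cube {f : ℝ → ℝ} (hf : Differentiable ℝ f) :
    (deriv fun x => f x ^ 3) = fun x => 3 * f x ^ 2 * deriv f x :=
  funext fun x => by simpa using ((hf x).hasDerivAt.fun_pow 3).deriv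

private theorem D_div_const {f : ℝ → ℝ} (c : ℝ) :
    (deriv fun x => f x / c) = fun x => deriv f x / c :=
  funext fun x => deriv_div_const c

/-- if `u(x,t)` is smooth and satisfies the bosonic reduction
`u_t = (-u_{xx} + u³/2)_x` of the SKdV₋₂ equation, then the operators
`L = ∂² - u∂` and `P = -4∂³ + 6u∂² + (3uₓ - (3/2)u²)∂` satisfy the Lax equation
`L_t = [P, L]`, i.e. `L_t - PL + LP` (with `L_t = -u_t ∂`) annihilates every
smooth function `φ(x)`. -/
theorem skdv_bosonic_lax (u : ℝ → ℝ → ℝ)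
    (hu : ContDiff ℝ (⊤ : ℕ∞) (Function.uncurry u))
    (hpde : ∀ x t, deriv (fun s => u x s) t
      = deriv (fun y => -(iteratedDeriv 2 (fun z => u z t) y) + (u y t) ^ 3 / 2) x)
    (L P : ℝ → (ℝ → ℝ) → (ℝ → ℝ))
    (hL : L = fun t φ x => iteratedDeriv 2 φ x - u x t * deriv φ x)
    (hP : P = fun t φ x => -4 * iteratedDeriv 3 φ x + 6 * u x t * iteratedDeriv 2 φ x
      + (3 * deriv (fun z => u z t) x - 3 / 2 * (u x t) ^ 2) * deriv φ x) :
    ∀ φ : ℝ → ℝ, ContDiff ℝ (⊤ : ℕ∞) φ → ∀ t x,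
      -(deriv (fun s => u x s) t) * deriv φ x - P t (L t φ) x + L t (P t φ) x = 0 := by
  intro φ hφ t x
  have h2 : ∀ f : ℝ → ℝ, iteratedDeriv 2 f = deriv (deriv f) := by
    intro f
    rw [show (2:ℕ) = 1 + 1 from rfl, iteratedDeriv_succ, iteratedDeriv_one]
  have h3 : ∀ f : ℝ → ℝ, iteratedDeriv 3 f = deriv (deriv (deriv f)) := by
    intro f
    rw [show (3:ℕ) = 2 + 1 from rfl, iteratedDeriv_succ, h2]
  have ha0 : ContDiff ℝ ∞ (fun y => u y t) :=
    (hu.comp (contDiff_id.prodMk contDiff_const)).of_le (by simp)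
  have ha1 : ContDiff ℝ ∞ (deriv (fun y => u y t)) := (contDiff_infty_iff_deriv.mp ha0).2
  have ha2 : ContDiff ℝ ∞ (deriv (deriv (fun y => u y t))) := (contDiff_infty_iff_deriv.mp ha1).2
  have da0 : Differentiable ℝ (fun y => u y t) := (contDiff_infty_iff_deriv.mp ha0).1
  have da1 : Differentiable ℝ (deriv (fun y => u y t)) := (contDiff_infty_iff_deriv.mp ha1).1
  have da2 : Differentiable ℝ (deriv (deriv (fun y => u y t))) := (contDiff_infty_iff_deriv.mp ha2).1
  have hφ0 : ContDiff ℝ ∞ φ := hφ.of_le (by simp)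
  have hφ1 : ContDiff ℝ ∞ (deriv φ) := (contDiff_infty_iff_deriv.mp hφ0).2
  have hφ2 : ContDiff ℝ ∞ (deriv (deriv φ)) := (contDiff_infty_iff_deriv.mp hφ1).2
  have hφ3 : ContDiff ℝ ∞ (deriv (deriv (deriv φ))) := (contDiff_infty_iff_deriv.mp hφ2).2
  have hφ4 : ContDiff ℝ ∞ (deriv (deriv (deriv (deriv φ)))) := (contDiff_infty_iff_deriv.mp hφ3).2
  have dφ0 : Differentiable ℝ φ := (contDiff_infty_iff_deriv.mp hφ0).1
  have dφ1 : Differentiable ℝ (deriv φ) := (contDiff_infty_iff_deriv.mp hφ1).1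
  have dφ2 : Differentiable ℝ (deriv (deriv φ)) := (contDiff_infty_iff_deriv.mp hφ2).1
  have dφ3 : Differentiable ℝ (deriv (deriv (deriv φ))) := (contDiff_infty_iff_deriv.mp hφ3).1
  have dφ4 : Differentiable ℝ (deriv (deriv (deriv (deriv φ)))) := (contDiff_infty_iff_deriv.mp hφ4).1
  rw [hpde x t]
  simp only [hL, hP, h2, h3]
  simp (disch := fun_prop) only [D_sub, D_add, D_neg, D_mul, D_const_mul, D_sq, D_cube,
    D_div_const, deriv_const']
  ring
end

section
/- Let u : ℝ → ℝ be smooth, λ₁ a constant, and a : ℝ → ℝ a smooth nowhere-vanishing function satisfying a' = a² - au - λ₁. Define u₁ = u + 2a'/a. If φ is smooth with φ'' - uφ' = λφ for some constant λ, then φ₁ := λ₁ φ + a φ' satisfies φ₁'' - u₁ φ₁' = λ φ₁. -/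
/-- scalar Darboux transformation in the bosonic limit. If `a` is smooth,
nowhere zero and satisfies `a' = a² - au - λ₁`, `u₁ = u + 2a'/a`, and `φ'' - uφ' = λφ`,
then `φ₁ = λ₁ φ + a φ'` satisfies `φ₁'' - u₁ φ₁' = λ φ₁`. -/
theorem scalar_darboux_transformation (u a φ : ℝ → ℝ) (l₁ lam : ℝ)
    (hu : ContDiff ℝ (⊤ : ℕ∞) u) (ha : ContDiff ℝ (⊤ : ℕ∞) a) (hφ : ContDiff ℝ (⊤ : ℕ∞) φ)
    (haz : ∀ x, a x ≠ 0)
    (hric : ∀ x, deriv a x = a x ^ 2 - a x * u x - l₁)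
    (u₁ : ℝ → ℝ) (hu₁ : u₁ = fun x => u x + 2 * deriv a x / a x)
    (heig : ∀ x, iteratedDeriv 2 φ x - u x * deriv φ x = lam * φ x)
    (φ₁ : ℝ → ℝ) (hφ₁ : φ₁ = fun x => l₁ * φ x + a x * deriv φ x) :
    ∀ x, iteratedDeriv 2 φ₁ x - u₁ x * deriv φ₁ x = lam * φ₁ x := by
  subst hu₁ hφ₁
  intro x
  have hφ' : ContDiff ℝ ((⊤ : ℕ∞) : WithTop ℕ∞) (deriv φ) :=
    (contDiff_infty_iff_deriv.mp (hφ.of_le (by simp))).2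
  have hφD : ∀ y, HasDerivAt φ (deriv φ y) y :=
    fun y => (hφ.differentiable (by simp) y).hasDerivAt
  have hφ'D : ∀ y, HasDerivAt (deriv φ) (deriv (deriv φ) y) y :=
    fun y => (hφ'.differentiable (by simp) y).hasDerivAt
  have haD : ∀ y, HasDerivAt a (deriv a y) y :=
    fun y => (ha.differentiable (by simp) y).hasDerivAt
  have h2 : ∀ y, deriv (deriv φ) y = u y * deriv φ y + lam * φ y := by
    intro y
    have h := heig y
    rw [iteratedDeriv_succ, iteratedDeriv_one] at h
    linarith
  have h₁ : ∀ y, HasDerivAt (fun z => l₁ * φ z + a z * deriv φ z)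
      (a y ^ 2 * deriv φ y + lam * (a y * φ y)) y := by
    intro y
    have h : HasDerivAt (fun z => l₁ * φ z + a z * deriv φ z) _ y := ((hφD y).const_mul l₁).add ((haD y).mul (hφ'D y))
    convert h using 1
    rw [h2 y, hric y]; ring
  have hd1 : deriv (fun z => l₁ * φ z + a z * deriv φ z)
      = fun y => a y ^ 2 * deriv φ y + lam * (a y * φ y) := by
    funext y; exact (h₁ y).deriv
  have h₂ : HasDerivAt (fun y => a y ^ 2 * deriv φ y + lam * (a y * φ y))
      ((2 * a x ^ 1 * deriv a x * deriv φ x + a x ^ 2 * deriv (deriv φ) x)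
        + lam * (deriv a x * φ x + a x * deriv φ x)) x :=
    (((haD x).pow 2).mul (hφ'D x)).add (((haD x).mul (hφD x)).const_mul lam)
  have hit : iteratedDeriv 2 (fun z => l₁ * φ z + a z * deriv φ z) x
      = (2 * a x ^ 1 * deriv a x * deriv φ x + a x ^ 2 * deriv (deriv φ) x)
        + lam * (deriv a x * φ x + a x * deriv φ x) := by
    rw [iteratedDeriv_succ, iteratedDeriv_one, hd1]
    exact h₂.deriv
  rw [hit, hd1]
  simp only [h2, hric]
  have hax := haz x
  field_simp
  ring
end

section
/- Let u, λ₁, a, u₁ be as in the bosonic Darboux transformation: a smooth and nowhere zero, a' = a² - au - λ₁, u₁ = u + 2a'/a. Set M(λ) = [[0,1],[λ,u]], M₁(λ) = [[0,1],[λ,u₁]], F = [[0,0],[a,0]], G = [[λ₁,a],[0,a²]], and T(λ) = λF + G. Then T satisfies the gauge (Darboux) condition T_x + T M - M₁ T = 0 for every λ. -/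
/-- the bosonic Darboux matrix `T(λ) = λF + G` with
`F = [[0,0],[a,0]]`, `G = [[λ₁,a],[0,a²]]` satisfies the gauge condition
`T_x + T M - M₁ T = 0` for `M(λ) = [[0,1],[λ,u]]`, `M₁(λ) = [[0,1],[λ,u₁]]`,
where `a' = a² - au - λ₁` and `u₁ = u + 2a'/a`. -/
theorem darboux_matrix_gauge_condition (u a u₁ : ℝ → ℝ) (l₁ : ℝ)
    (hu : ContDiff ℝ (⊤ : ℕ∞) u) (ha : ContDiff ℝ (⊤ : ℕ∞) a) (haz : ∀ x, a x ≠ 0)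
    (hric : ∀ x, deriv a x = a x ^ 2 - a x * u x - l₁)
    (hu₁ : u₁ = fun x => u x + 2 * deriv a x / a x) :
    ∀ lam x : ℝ,
      (!![0, deriv a x; lam * deriv a x, deriv (fun y => a y ^ 2) x] :
          Matrix (Fin 2) (Fin 2) ℝ)
        + (lam • !![0, 0; a x, 0] + !![l₁, a x; 0, a x ^ 2]) * !![0, 1; lam, u x]
        - !![0, 1; lam, u₁ x] * (lam • !![0, 0; a x, 0] + !![l₁, a x; 0, a x ^ 2]) = 0 := by
  intro lam x
  have hda : DifferentiableAt ℝ a x := (ha.differentiable (by simp)).differentiableAt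
  have hsq : deriv (fun y => a y ^ 2) x = 2 * a x * deriv a x := by
    rw [show (fun y => a y ^ 2) = (fun y => a y * a y) by ext y; ring, deriv_fun_mul hda hda]; ring
  subst hu₁
  ext i j
  fin_cases i <;> fin_cases j <;>
    simp [Matrix.mul_apply, Fin.sum_univ_succ, hsq, hric x] <;>
    (try field_simp [haz x]) <;> ring
end

section
/- Bianchi permutability (bosonic case): let v, v₁, v₂ be smooth nowhere-zero functions and k₁ ≠ ±k₂ constants with (v₁v)' = k₁(v₁² - v²) and (v₂v)' = k₂(v₂² - v²), and suppose k₁v₁ - k₂v₂ is nowhere zero. Define v₁₂ = v (k₁v₂ - k₂v₁)/(k₁v₁ - k₂v₂). Then (v₁₂ v₁)' = k₂(v₁₂² - v₁²) and (v₁₂ v₂)' = k₁(v₁₂² - v₂²). -/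
/-- Bianchi permutability (bosonic case). If `(v₁v)' = k₁(v₁² - v²)`
and `(v₂v)' = k₂(v₂² - v²)` with `k₁ ≠ ±k₂` and `k₁v₁ - k₂v₂` nowhere zero, then
`v₁₂ = v(k₁v₂ - k₂v₁)/(k₁v₁ - k₂v₂)` satisfies `(v₁₂v₁)' = k₂(v₁₂² - v₁²)` and
`(v₁₂v₂)' = k₁(v₁₂² - v₂²)`. -/
theorem bianchi_permutability (v v₁ v₂ : ℝ → ℝ)
    (hv : ContDiff ℝ (⊤ : ℕ∞) v) (hv₁ : ContDiff ℝ (⊤ : ℕ∞) v₁) (hv₂ : ContDiff ℝ (⊤ : ℕ∞) v₂)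
    (hvz : ∀ x, v x ≠ 0) (hv₁z : ∀ x, v₁ x ≠ 0) (hv₂z : ∀ x, v₂ x ≠ 0)
    (k₁ k₂ : ℝ) (hk : k₁ ≠ k₂) (hk' : k₁ ≠ -k₂)
    (hbt₁ : ∀ x, deriv (fun y => v₁ y * v y) x = k₁ * (v₁ x ^ 2 - v x ^ 2))
    (hbt₂ : ∀ x, deriv (fun y => v₂ y * v y) x = k₂ * (v₂ x ^ 2 - v x ^ 2))
    (hden : ∀ x, k₁ * v₁ x - k₂ * v₂ x ≠ 0)
    (v₁₂ : ℝ → ℝ)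
    (hv₁₂ : v₁₂ = fun x => v x * (k₁ * v₂ x - k₂ * v₁ x) / (k₁ * v₁ x - k₂ * v₂ x)) :
    (∀ x, deriv (fun y => v₁₂ y * v₁ y) x = k₂ * (v₁₂ x ^ 2 - v₁ x ^ 2))
      ∧ (∀ x, deriv (fun y => v₁₂ y * v₂ y) x = k₁ * (v₁₂ x ^ 2 - v₂ x ^ 2)) := by
  subst hv₁₂
  have key : ∀ x,
      (HasDerivAt v₁ ((k₁ * (v₁ x ^ 2 - v x ^ 2) - v₁ x * deriv v x) / v x) x) ∧
      (HasDerivAt v₂ ((k₂ * (v₂ x ^ 2 - v x ^ 2) - v₂ x * deriv v x) / v x) x) := by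
    intro x
    have ha : HasDerivAt v (deriv v x) x := (hv.differentiable (by simp) x).hasDerivAt
    have hb : HasDerivAt v₁ (deriv v₁ x) x := (hv₁.differentiable (by simp) x).hasDerivAt
    have hc : HasDerivAt v₂ (deriv v₂ x) x := (hv₂.differentiable (by simp) x).hasDerivAt
    have E1 : deriv v₁ x * v x + v₁ x * deriv v x = k₁ * (v₁ x ^ 2 - v x ^ 2) := by
      rw [← (hb.mul ha).deriv]; exact hbt₁ x
    have E2 : deriv v₂ x * v x + v₂ x * deriv v x = k₂ * (v₂ x ^ 2 - v x ^ 2) := by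
      rw [← (hc.mul ha).deriv]; exact hbt₂ x
    constructor
    · have : deriv v₁ x = (k₁ * (v₁ x ^ 2 - v x ^ 2) - v₁ x * deriv v x) / v x := by
        field_simp [hvz x] ; linarith
      rw [← this]; exact hb
    · have : deriv v₂ x = (k₂ * (v₂ x ^ 2 - v x ^ 2) - v₂ x * deriv v x) / v x := by
        field_simp [hvz x] ; linarith
      rw [← this]; exact hc
  have h12 : ∀ x, HasDerivAt (fun y => v y * (k₁ * v₂ y - k₂ * v₁ y) / (k₁ * v₁ y - k₂ * v₂ y))
      ((((deriv v x) * (k₁ * v₂ x - k₂ * v₁ x) +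
          v x * (k₁ * ((k₂ * (v₂ x ^ 2 - v x ^ 2) - v₂ x * deriv v x) / v x)
               - k₂ * ((k₁ * (v₁ x ^ 2 - v x ^ 2) - v₁ x * deriv v x) / v x)))
          * (k₁ * v₁ x - k₂ * v₂ x)
        - v x * (k₁ * v₂ x - k₂ * v₁ x)
          * (k₁ * ((k₁ * (v₁ x ^ 2 - v x ^ 2) - v₁ x * deriv v x) / v x)
           - k₂ * ((k₂ * (v₂ x ^ 2 - v x ^ 2) - v₂ x * deriv v x) / v x)))
        / (k₁ * v₁ x - k₂ * v₂ x) ^ 2) x := by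
    intro x
    have ha : HasDerivAt v (deriv v x) x := (hv.differentiable (by simp) x).hasDerivAt
    obtain ⟨hb, hc⟩ := key x
    exact (ha.mul ((hc.const_mul k₁).sub (hb.const_mul k₂))).div
      ((hb.const_mul k₁).sub (hc.const_mul k₂)) (hden x)
  constructor
  · intro x
    obtain ⟨hb, hc⟩ := key x
    erw [((h12 x).mul hb).deriv]
    beta_reduce
    have hd := hden x
    set d := k₁ * v₁ x - k₂ * v₂ x with hdef
    field_simp [hvz x, hd]
    rw [hdef]
    ring
  · intro x
    obtain ⟨hb, hc⟩ := key x
    erw [((h12 x).mul hc).deriv]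
    beta_reduce
    have hd := hden x
    set d := k₁ * v₁ x - k₂ * v₂ x with hdef
    field_simp [hvz x, hd]
    rw [hdef]
    ring
end

section
/- Permutability of Darboux matrices (bosonic case): under the hypotheses of the bosonic superposition formula define a₁ = k₁v₁/v, a₂ = k₂v₂/v, a₁₂ = k₂v₁₂/v₁, a₂₁ = k₁v₁₂/v₂, and Darboux matrices T(a, μ; λ) = λ[[0,0],[a,0]] + [[μ, a],[0, a²]]. Then T(a₁₂, k₂²; λ) T(a₁, k₁²; λ) = T(a₂₁, k₁²; λ) T(a₂, k₂²; λ) for all λ. -/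
/-- permutability of Darboux matrices (bosonic case):
`T(a₁₂, k₂²; λ) T(a₁, k₁²; λ) = T(a₂₁, k₁²; λ) T(a₂, k₂²; λ)` for all `λ`, where
`T(a, μ; λ) = λ[[0,0],[a,0]] + [[μ,a],[0,a²]]`, `a₁ = k₁v₁/v`, `a₂ = k₂v₂/v`,
`a₁₂ = k₂v₁₂/v₁`, `a₂₁ = k₁v₁₂/v₂`, under the hypotheses of the bosonic
superposition formula. -/
theorem darboux_matrix_permutability (v v₁ v₂ : ℝ → ℝ)
    (hv : ContDiff ℝ (⊤ : ℕ∞) v) (hv₁ : ContDiff ℝ (⊤ : ℕ∞) v₁) (hv₂ : ContDiff ℝ (⊤ : ℕ∞) v₂)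
    (hvz : ∀ x, v x ≠ 0) (hv₁z : ∀ x, v₁ x ≠ 0) (hv₂z : ∀ x, v₂ x ≠ 0)
    (k₁ k₂ : ℝ) (hk : k₁ ≠ k₂) (hk' : k₁ ≠ -k₂)
    (hbt₁ : ∀ x, deriv (fun y => v₁ y * v y) x = k₁ * (v₁ x ^ 2 - v x ^ 2))
    (hbt₂ : ∀ x, deriv (fun y => v₂ y * v y) x = k₂ * (v₂ x ^ 2 - v x ^ 2))
    (hden : ∀ x, k₁ * v₁ x - k₂ * v₂ x ≠ 0)
    (v₁₂ : ℝ → ℝ)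
    (hv₁₂ : v₁₂ = fun x => v x * (k₁ * v₂ x - k₂ * v₁ x) / (k₁ * v₁ x - k₂ * v₂ x))
    (a₁ a₂ a₁₂ a₂₁ : ℝ → ℝ)
    (ha₁ : a₁ = fun x => k₁ * v₁ x / v x) (ha₂ : a₂ = fun x => k₂ * v₂ x / v x)
    (ha₁₂ : a₁₂ = fun x => k₂ * v₁₂ x / v₁ x) (ha₂₁ : a₂₁ = fun x => k₁ * v₁₂ x / v₂ x)
    (T : (ℝ → ℝ) → ℝ → ℝ → ℝ → Matrix (Fin 2) (Fin 2) ℝ)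
    (hT : T = fun a μ lam x => lam • !![0, 0; a x, 0] + !![μ, a x; 0, a x ^ 2]) :
    ∀ lam x : ℝ,
      T a₁₂ (k₂ ^ 2) lam x * T a₁ (k₁ ^ 2) lam x
        = T a₂₁ (k₁ ^ 2) lam x * T a₂ (k₂ ^ 2) lam x := by
  intro lam x
  subst hT ha₁ ha₂ ha₁₂ ha₂₁ hv₁₂
  have h0 := hvz x; have h1 := hv₁z x; have h2 := hv₂z x; have hd := hden x
  ext i j
  fin_cases i <;> fin_cases j <;>
    simp [Matrix.mul_apply, Fin.sum_univ_two, Matrix.smul_apply] <;>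
    field_simp <;> ring
end
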